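/- Let f = (f₁, f₂) : M → ℝ² be continuous and let x, y ∈ M lie on the same fiber-component of f, i.e., q_f(x) = q_f(y). Set p = q_{f₁}(x). Then q_{f₁}(x) = q_{f₁}(y) = p and x, y lie on the same connected component of f₂ restricted to q_{f₁}⁻¹(p), i.e., q_{f̃₂ᵖ}(x) = q_{f̃₂ᵖ}(y). Conversely, if q_{f₁}(x) = q_{f₁}(y) = p and q_{f̃₂ᵖ}(x) = q_{f̃₂ᵖ}(y), then q_f(x) = q_f(y). -/

import Mathlib

open Set Topology

variable {M : Type*} [TopologicalSpace M]

/-- The fiber-component equivalence relation of a map `g`: `x ~ y` iff `y` lies in the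
connected component of `x` within the fiber `g ⁻¹' {g x}`. -/
def reebSetoid {T : Type*} (g : M → T) : Setoid M where
  r x y := y ∈ connectedComponentIn (g ⁻¹' {g x}) x
  iseqv := by
    constructor
    · intro x
      exact mem_connectedComponentIn rfl
    · intro x y h
      have hy : y ∈ g ⁻¹' {g x} := connectedComponentIn_subset (g ⁻¹' {g x}) x h
      have hgy : g y = g x := hy
      have hx : x ∈ connectedComponentIn (g ⁻¹' {g x}) y := by
        rw [← connectedComponentIn_eq h]
        exact mem_connectedComponentIn rfl
      show x ∈ connectedComponentIn (g ⁻¹' {g y}) y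
      rwa [hgy]
    · intro x y z hxy hyz
      have hy : y ∈ g ⁻¹' {g x} := connectedComponentIn_subset (g ⁻¹' {g x}) x hxy
      have hgy : g y = g x := hy
      show z ∈ connectedComponentIn (g ⁻¹' {g x}) x
      rw [connectedComponentIn_eq hxy]
      have : z ∈ connectedComponentIn (g ⁻¹' {g y}) y := hyz
      rwa [hgy] at this

/-- The Reeb quotient (Reeb space / Reeb graph) of a map `g`. -/
def ReebQuot {T : Type*} (g : M → T) : Type _ := Quotient (reebSetoid g)

instance {T : Type*} (g : M → T) : TopologicalSpace (ReebQuot g) :=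
  instTopologicalSpaceQuotient

/-- The quotient map onto the Reeb quotient. -/
def reebMk {T : Type*} (g : M → T) : M → ReebQuot g := Quotient.mk (reebSetoid g)

/-- Fiber components of a finer map are contained in fiber components of a coarser map. -/
theorem reeb_descend {T S : Type*} {g : M → T} {g' : M → S}
    (hg : ∀ a b, g a = g b → g' a = g' b) {x y : M}
    (h : (reebSetoid g).r x y) : (reebSetoid g').r x y := by
  have hsub : g ⁻¹' {g x} ⊆ g' ⁻¹' {g' x} := by
    intro z hz
    simp only [mem_preimage, mem_singleton_iff] at hz ⊢
    exact hg z x hz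
  exact connectedComponentIn_mono x hsub h

/-- The map `ω₁ : RS_f → RG_{f₁}` induced on Reeb quotients. -/
def omega1 (f₁ f₂ : M → ℝ) : ReebQuot (fun m => (f₁ m, f₂ m)) → ReebQuot f₁ :=
  Quotient.lift (reebMk f₁)
    (fun _ _ hab => Quot.sound (reeb_descend (fun _ _ huv => congrArg Prod.fst huv) hab))

/-- The map `ω₂ : RS_f → RG_{f₂}` induced on Reeb quotients. -/
def omega2 (f₁ f₂ : M → ℝ) : ReebQuot (fun m => (f₁ m, f₂ m)) → ReebQuot f₂ :=
  Quotient.lift (reebMk f₂)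
    (fun _ _ hab => Quot.sound (reeb_descend (fun _ _ huv => congrArg Prod.snd huv) hab))

/-- The induced map `f̄ : ReebQuot g → T` with `f̄ ∘ q_g = g`. -/
def reebLift {T : Type*} (g : M → T) : ReebQuot g → T :=
  Quotient.lift g (fun a b hab => by
    have : b ∈ g ⁻¹' {g a} := connectedComponentIn_subset (g ⁻¹' {g a}) a hab
    exact (show g b = g a from this).symm)

/-!
The component of `x` in the fiber of `f = (f₁, f₂)` lies in the component `C` of `x` in the
fiber of `f₁`, so it is also the component of `x` in `f₂ ⁻¹' {f₂ x} ∩ C`. Because the inclusion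
of the subspace `C` is inducing, components computed inside `C` are exactly components in `M`
of subsets of `C`; hence this is the fiber-component of `f₂|_C` through `x`.
-/

section ConnectedComponentIn

variable {α β : Type*} [TopologicalSpace α] [TopologicalSpace β]

theorem Topology.IsInducing.image_connectedComponentIn {e : β → α} (he : IsInducing e)
    (S : Set α) (x : β) :
    e '' connectedComponentIn (e ⁻¹' S) x = connectedComponentIn (S ∩ range e) (e x) := by
  by_cases hx : e x ∈ S
  swap
  · rw [connectedComponentIn_eq_empty (F := e ⁻¹' S) hx,
      connectedComponentIn_eq_empty fun h => hx h.1, image_empty]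
  apply Subset.antisymm
  · have hpre : IsPreconnected (e '' connectedComponentIn (e ⁻¹' S) x) :=
      he.isPreconnected_image.mpr isPreconnected_connectedComponentIn
    refine hpre.subset_connectedComponentIn (mem_image_of_mem e (mem_connectedComponentIn hx)) ?_
    rintro _ ⟨z, hz, rfl⟩
    exact ⟨connectedComponentIn_subset (e ⁻¹' S) x hz, mem_range_self z⟩
  · set K := connectedComponentIn (S ∩ range e) (e x)
    have hK : e '' (e ⁻¹' K) = K :=
      image_preimage_eq_of_subset ((connectedComponentIn_subset _ _).trans inter_subset_right)
    have hpre : IsPreconnected (e ⁻¹' K) := by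
      rw [← he.isPreconnected_image, hK]
      exact isPreconnected_connectedComponentIn
    rw [← hK]
    exact image_mono (hpre.subset_connectedComponentIn
      (mem_connectedComponentIn ⟨hx, mem_range_self x⟩)
      (preimage_mono ((connectedComponentIn_subset _ _).trans inter_subset_left)))

theorem connectedComponentIn_inter_connectedComponentIn (F G : Set α) (x : α) :
    connectedComponentIn (G ∩ connectedComponentIn F x) x = connectedComponentIn (F ∩ G) x := by
  by_cases hx : x ∈ F ∩ G
  swap
  · rw [connectedComponentIn_eq_empty hx,
      connectedComponentIn_eq_empty fun h => hx ⟨connectedComponentIn_subset _ _ h.2, h.1⟩]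
  apply Subset.antisymm
  · refine connectedComponentIn_mono x fun z hz => ⟨connectedComponentIn_subset _ _ hz.2, hz.1⟩
  · exact isPreconnected_connectedComponentIn.subset_connectedComponentIn
      (mem_connectedComponentIn hx) (subset_inter
        ((connectedComponentIn_subset _ _).trans inter_subset_right)
        (connectedComponentIn_mono x inter_subset_left))

end ConnectedComponentIn

section Reeb

variable {T : Type*}

theorem reebMk_eq_reebMk_iff {g : M → T} {x y : M} :
    reebMk g x = reebMk g y ↔ y ∈ connectedComponentIn (g ⁻¹' {g x}) x :=
  Quotient.eq

theorem reebMk_preimage_reebMk (g : M → T) (x : M) :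
    reebMk g ⁻¹' {reebMk g x} = connectedComponentIn (g ⁻¹' {g x}) x := by
  ext y
  rw [mem_preimage, mem_singleton_iff, eq_comm, reebMk_eq_reebMk_iff]

theorem exists_reebMk_restrict_eq_iff {C : Set M} (g : M → T) {x : M} (hx : x ∈ C) (y : M) :
    (∃ hy : y ∈ C, reebMk (fun c : C => g c) ⟨x, hx⟩ = reebMk (fun c : C => g c) ⟨y, hy⟩) ↔
      y ∈ connectedComponentIn (g ⁻¹' {g x} ∩ C) x := by
  have himage := IsInducing.subtypeVal.image_connectedComponentIn (g ⁻¹' {g x}) ⟨x, hx⟩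
  rw [Subtype.range_coe] at himage
  simp only [reebMk_eq_reebMk_iff, ← himage]
  constructor
  · rintro ⟨hy, hmem⟩
    exact ⟨⟨y, hy⟩, hmem, rfl⟩
  · rintro ⟨⟨y, hy⟩, hmem, rfl⟩
    exact ⟨hy, hmem⟩

end Reeb

theorem same_fiberComponent_iff_general {M : Type*} [TopologicalSpace M] (f₁ f₂ : M → ℝ) (x y : M) :
    reebMk (fun m => (f₁ m, f₂ m)) x = reebMk (fun m => (f₁ m, f₂ m)) y ↔
      ∃ hy : y ∈ (reebMk f₁ ⁻¹' {reebMk f₁ x} : Set M),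
        reebMk (fun c : (reebMk f₁ ⁻¹' {reebMk f₁ x} : Set M) => f₂ c.1) ⟨x, rfl⟩ =
          reebMk (fun c : (reebMk f₁ ⁻¹' {reebMk f₁ x} : Set M) => f₂ c.1) ⟨y, hy⟩ := by
  have hfiber : (fun m => (f₁ m, f₂ m)) ⁻¹' {(f₁ x, f₂ x)} = f₁ ⁻¹' {f₁ x} ∩ f₂ ⁻¹' {f₂ x} := by
    ext; simp [Prod.ext_iff]
  rw [exists_reebMk_restrict_eq_iff (C := reebMk f₁ ⁻¹' {reebMk f₁ x}) f₂ rfl y,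
    reebMk_preimage_reebMk, connectedComponentIn_inter_connectedComponentIn,
    reebMk_eq_reebMk_iff, hfiber]

/-- two points lie on the same fiber-component of `f` iff they agree in the
first-dimensional Reeb graph and in the corresponding second-dimensional Reeb graph. -/
theorem same_fiberComponent_iff {M : Type*} [TopologicalSpace M] (f₁ f₂ : M → ℝ)
    (hf₁ : Continuous f₁) (hf₂ : Continuous f₂) (x y : M) :
    reebMk (fun m => (f₁ m, f₂ m)) x = reebMk (fun m => (f₁ m, f₂ m)) y ↔
      ∃ hy : y ∈ (reebMk f₁ ⁻¹' {reebMk f₁ x} : Set M),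
        reebMk (fun c : (reebMk f₁ ⁻¹' {reebMk f₁ x} : Set M) => f₂ c.1) ⟨x, rfl⟩ =
          reebMk (fun c : (reebMk f₁ ⁻¹' {reebMk f₁ x} : Set M) => f₂ c.1) ⟨y, hy⟩ :=
  same_fiberComponent_iff_general f₁ f₂ x y
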